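/- In the single-meaning 'left' and 'right' models (left model: single state 1 with single meaning 1, p true; right model: states {1,2} with 1 ∼_a 2, each with single meaning 1, p true at state 1 and false at state 2), for every formula φ in the C-fragment (built from p, ¬, →, C_a only): (1,1) ⊨_l φ if and only if (1,1) ⊨_r φ. -/

import Mathlib

/-- An epistemic model with meanings. -/
structure EMM (Agent Var : Type) where
  W : Type
  rel : Agent → W → W → Prop
  equiv : ∀ a, Equivalence (rel a)
  M : W → Type
  nonempty : ∀ w, Nonempty (M w)
  val : (w : W) → Var → Set (M w)

/-- Formulas of the bimodal language. -/
inductive Form (Agent Var : Type) : Type where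
  | var : Var → Form Agent Var
  | neg : Form Agent Var → Form Agent Var
  | imp : Form Agent Var → Form Agent Var → Form Agent Var
  | K : Agent → Form Agent Var → Form Agent Var
  | C : Agent → Form Agent Var → Form Agent Var

variable {Agent Var : Type}

/-- Satisfaction relation. -/
def Sat (Mo : EMM Agent Var) : Form Agent Var → (w : Mo.W) → Mo.M w → Prop
  | .var p, w, m => m ∈ Mo.val w p
  | .neg φ, w, m => ¬ Sat Mo φ w m
  | .imp φ ψ, w, m => Sat Mo φ w m → Sat Mo ψ w m
  | .K a φ, w, _ => ∀ u, Mo.rel a w u → ∀ m' : Mo.M u, Sat Mo φ u m'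
  | .C a φ, w, _ => ∀ u, Mo.rel a w u → ∀ m' m'' : Mo.M u, Sat Mo φ u m' → Sat Mo φ u m''

/-- Membership in the C-fragment: no occurrence of the K modality. -/
def noK : Form Agent Var → Prop
  | .var _ => True
  | .neg φ => noK φ
  | .imp φ ψ => noK φ ∧ noK ψ
  | .K _ _ => False
  | .C _ φ => noK φ

/-- The left model: a single state with a single meaning, p true. -/
def leftM : EMM Unit Unit where
  W := Unit
  rel := fun _ _ _ => True
  equiv := fun _ => ⟨fun _ => trivial, fun _ => trivial, fun _ _ => trivial⟩
  M := fun _ => Unit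
  nonempty := fun _ => ⟨()⟩
  val := fun _ _ => Set.univ

/-- The right model: two indistinguishable states, each with a single meaning,
p true at state 0 (named 1) and false at state 1 (named 2). -/
def rightM : EMM Unit Unit where
  W := Fin 2
  rel := fun _ _ _ => True
  equiv := fun _ => ⟨fun _ => trivial, fun _ => trivial, fun _ _ => trivial⟩
  M := fun _ => Unit
  nonempty := fun _ => ⟨()⟩
  val := fun w _ => {m : Unit | w = 0}

/- With a single meaning per state, `C a ψ` compares a formula's truth at a meaning with its
truth at the same meaning, so it holds everywhere in both models. On the remaining connectives
the two models agree at state `0`, where `p` is true in each, and induction on the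
`K`-free formula finishes the proof. -/

theorem sat_C_of_subsingleton (Mo : EMM Agent Var) [∀ w, Subsingleton (Mo.M w)]
    (a : Agent) (φ : Form Agent Var) (w : Mo.W) (m : Mo.M w) : Sat Mo (.C a φ) w m :=
  fun _ _ m' m'' h => Subsingleton.elim m' m'' ▸ h

instance (w : leftM.W) : Subsingleton (leftM.M w) := inferInstanceAs (Subsingleton Unit)

instance (w : rightM.W) : Subsingleton (rightM.M w) := inferInstanceAs (Subsingleton Unit)

theorem stmt14 (φ : Form Unit Unit) (hφ : noK φ) :
    Sat leftM φ () () ↔ Sat rightM φ (0 : Fin 2) () := by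
  induction φ with
  | var => exact iff_of_true (Set.mem_univ _) rfl
  | neg ψ ih => exact not_congr (ih hφ)
  | imp ψ χ ihψ ihχ => exact imp_congr (ihψ hφ.1) (ihχ hφ.2)
  | K => exact hφ.elim
  | C => exact iff_of_true (sat_C_of_subsingleton _ _ _ _ _) (sat_C_of_subsingleton _ _ _ _ _)
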